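/- Let K ≥ 2 be an integer, set ρ := K^{3/2}, and for 1 ≤ k < K set β_k := (k+1)/2 and γ_k := (k+1)/(4(L_f + ρL_c)). Suppose x̄ ∈ X is feasible and minimizes Φ := f + ψ over the feasible set; suppose λ* ∈ ℝᵐ has nonnegative components, satisfies Φ(x̄) ≤ Φ(z) + ⟨λ*, c(z)⟩ for all z ∈ X, and Λ := ‖λ*‖; and suppose x*_ρ ∈ X minimizes Φ + ρP over X. Let x₁ = z₁ ∈ X and, for 1 ≤ k < K, let δ_k ∈ ℝⁿ with ‖δ_k‖ ≤ 2G and define y_k = (1 − 1/β_k)x_k + (1/β_k)z_k; z_{k+1} ∈ X the minimizer over X of u ↦ γ_k(⟨∇f(y_k) + ρ∇P(y_k) + δ_k, u⟩ + ψ(u)) + ½‖u − z_k‖²; and x_{k+1} = (1 − 1/β_k)x_k + (1/β_k)z_{k+1}. Then ‖[c(x_K)]₊‖ ≤ √(6GD)·K^{−3/4} + √(12L_c)·D·K^{−1} + 2Λ·K^{−3/2} + √(12L_f)·D·K^{−7/4}. -/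

import Mathlib

open RealInnerProductSpace

variable {F : Type*} [NormedAddCommGroup F] [InnerProductSpace ℝ F] [CompleteSpace F]

lemma grad_ineq {φ : F → ℝ} {φ' : F → F} (hconv : ConvexOn ℝ Set.univ φ)
    (hgrad : ∀ w, HasGradientAt φ (φ' w) w) (x y : F) :
    φ x + ⟪φ' x, y - x⟫ ≤ φ y := by
  set l : ℝ →ᵃ[ℝ] F := AffineMap.lineMap x y with hl
  have hlt : ∀ t : ℝ, l t = x + t • (y - x) := by
    intro t; simp [hl, AffineMap.lineMap_apply]; abel
  have hline : ∀ t : ℝ, HasDerivAt (fun s : ℝ => l s) (y - x) t := by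
    intro t
    have : HasDerivAt (fun s : ℝ => x + s • (y - x)) (y - x) t := by
      simpa using ((hasDerivAt_id t).smul_const (y - x)).const_add x
    exact this.congr_of_eventuallyEq (by filter_upwards with s using (hlt s))
  have hq : HasDerivAt (fun t : ℝ => φ (l t)) ⟪φ' x, y - x⟫ 0 := by
    have h1 := ((hgrad (l 0)).hasFDerivAt).comp_hasDerivAt 0 (hline 0)
    have h0 : l 0 = x := by simp [hlt]
    rw [h0] at h1
    simp only [InnerProductSpace.toDual_apply_apply] at h1
    exact h1
  have hqc : ConvexOn ℝ Set.univ (fun t : ℝ => φ (l t)) := by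
    have := hconv.comp_affineMap l
    exact this
  have := hqc.le_slope_of_hasDerivAt (Set.mem_univ (0:ℝ)) (Set.mem_univ (1:ℝ))
    one_pos hq
  rw [slope_def_field] at this
  have h0 : l 0 = x := by simp [hlt]
  have h1 : l 1 = y := by simp [hlt]
  rw [h0, h1] at this
  simp at this
  linarith

lemma descent_lemma {φ : F → ℝ} {φ' : F → F} (hgrad : ∀ w, HasGradientAt φ (φ' w) w)
    {s : Set F} (hs : Convex ℝ s) {L : ℝ} (hL : 0 ≤ L)
    (hLip : ∀ w ∈ s, ∀ v ∈ s, ‖φ' w - φ' v‖ ≤ L * ‖w - v‖)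
    {a b : F} (ha : a ∈ s) (hb : b ∈ s) :
    φ b ≤ φ a + ⟪φ' a, b - a⟫ + L * ‖b - a‖ ^ 2 := by
  have key := (convex_segment a b).norm_image_sub_le_of_norm_hasFDerivWithin_le'
    (f := φ) (f' := fun w => InnerProductSpace.toDual ℝ F (φ' w))
    (φ := InnerProductSpace.toDual ℝ F (φ' a)) (C := L * ‖b - a‖)
    (fun w _ => ((hgrad w).hasFDerivAt).hasFDerivWithinAt)
    ?_ (left_mem_segment ℝ a b) (right_mem_segment ℝ a b)
  · have happ : (InnerProductSpace.toDual ℝ F (φ' a)) (b - a) = ⟪φ' a, b - a⟫ := rfl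
    rw [happ] at key
    have habs : |φ b - φ a - ⟪φ' a, b - a⟫| ≤ L * ‖b - a‖ * ‖b - a‖ := by
      simpa [Real.norm_eq_abs] using key
    have := (le_abs_self (φ b - φ a - ⟪φ' a, b - a⟫)).trans habs
    nlinarith [sq_abs ‖b-a‖, this]
  · intro w hw
    rcases hw with ⟨u, v, hu, hv, huv, rfl⟩
    have h1 : (InnerProductSpace.toDual ℝ F) (φ' (u • a + v • b)) -
        (InnerProductSpace.toDual ℝ F) (φ' a) =
        (InnerProductSpace.toDual ℝ F) (φ' (u • a + v • b) - φ' a) := by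
      rw [map_sub]
    rw [h1, LinearIsometryEquiv.norm_map]
    have hsub : u • a + v • b - a = v • (b - a) := by
      have : u = 1 - v := by linarith
      rw [this]; module
    have hws : u • a + v • b ∈ segment ℝ a b := ⟨u, v, hu, hv, huv, rfl⟩
    have h2 := hLip _ (hs.segment_subset ha hb hws) a ha
    have h3 : ‖u • a + v • b - a‖ ≤ ‖b - a‖ := by
      rw [hsub, norm_smul, Real.norm_eq_abs, abs_of_nonneg hv]
      nlinarith [norm_nonneg (b - a)]
    calc ‖φ' (u • a + v • b) - φ' a‖ ≤ L * ‖u • a + v • b - a‖ := h2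
      _ ≤ L * ‖b - a‖ := by nlinarith

lemma comb_norm_sq (a b : F) (t : ℝ) :
    ‖(1 - t) • a + t • b‖ ^ 2 =
      (1 - t) * ‖a‖ ^ 2 + t * ‖b‖ ^ 2 - t * (1 - t) * ‖a - b‖ ^ 2 := by
  rw [← real_inner_self_eq_norm_sq, ← real_inner_self_eq_norm_sq,
    ← real_inner_self_eq_norm_sq, ← real_inner_self_eq_norm_sq]
  simp only [inner_add_left, inner_add_right, inner_sub_left, inner_sub_right,
    real_inner_smul_left, real_inner_smul_right]
  rw [real_inner_comm b a]
  ring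

lemma le_add_sqrt {v a b : ℝ} (hv : 0 ≤ v) (ha : 0 ≤ a) (hb : 0 ≤ b)
    (h : v ^ 2 ≤ a * v + b) : v ≤ a + Real.sqrt b := by
  by_contra hcon
  push_neg at hcon
  nlinarith [Real.sq_sqrt hb, Real.sqrt_nonneg b]

lemma sqrt_add_le' {a b : ℝ} (ha : 0 ≤ a) (hb : 0 ≤ b) :
    Real.sqrt (a + b) ≤ Real.sqrt a + Real.sqrt b := by
  have h := Real.sqrt_le_sqrt (show a + b ≤ (Real.sqrt a + Real.sqrt b) ^ 2 by
    nlinarith [Real.sq_sqrt ha, Real.sq_sqrt hb, Real.sqrt_nonneg a, Real.sqrt_nonneg b])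
  rwa [Real.sqrt_sq (by positivity)] at h

lemma convexOn_penalty {m : ℕ} (c : Fin m → F → ℝ) (hc : ∀ i, ConvexOn ℝ Set.univ (c i)) :
    ConvexOn ℝ Set.univ (fun u => (1 : ℝ) / 2 * ∑ i, max (c i u) 0 ^ 2) := by
  refine ⟨convex_univ, ?_⟩
  intro p _ q _ a b ha hb hab
  simp only [smul_eq_mul]
  have hper : ∀ i : Fin m, max (c i (a • p + b • q)) 0 ^ 2 ≤
      a * max (c i p) 0 ^ 2 + b * max (c i q) 0 ^ 2 := by
    intro i
    have h1 := (hc i).2 (Set.mem_univ p) (Set.mem_univ q) ha hb hab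
    simp only [smul_eq_mul] at h1
    have hmp := le_max_left (c i p) 0
    have hmq := le_max_left (c i q) 0
    have hmp0 := le_max_right (c i p) 0
    have hmq0 := le_max_right (c i q) 0
    have h2 : max (c i (a • p + b • q)) 0 ≤ a * max (c i p) 0 + b * max (c i q) 0 := by
      apply max_le
      · nlinarith
      · nlinarith
    have hmm : (0:ℝ) ≤ max (c i (a • p + b • q)) 0 := le_max_right _ _
    have hs : max (c i (a • p + b • q)) 0 ^ 2 ≤ (a * max (c i p) 0 + b * max (c i q) 0) ^ 2 :=
      pow_le_pow_left₀ hmm h2 2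
    nlinarith [sq_nonneg (max (c i p) 0 - max (c i q) 0), mul_nonneg ha hb]
  have hsum := Finset.sum_le_sum (fun i (_ : i ∈ Finset.univ) => hper i)
  rw [Finset.sum_add_distrib, ← Finset.mul_sum, ← Finset.mul_sum] at hsum
  linarith

lemma prox_strong {X : Set F} (hX : Convex ℝ X) {ψ : F → ℝ} (hψ : ConvexOn ℝ Set.univ ψ)
    {γ : ℝ} (hγ : 0 ≤ γ) (v zk zp u : F) (hzp : zp ∈ X) (hu : u ∈ X)
    (hmin : ∀ w ∈ X, γ * (⟪v, zp⟫ + ψ zp) + ‖zp - zk‖ ^ 2 / 2 ≤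
      γ * (⟪v, w⟫ + ψ w) + ‖w - zk‖ ^ 2 / 2) :
    γ * (⟪v, zp⟫ + ψ zp) + ‖zp - zk‖ ^ 2 / 2 + ‖u - zp‖ ^ 2 / 2 ≤
      γ * (⟪v, u⟫ + ψ u) + ‖u - zk‖ ^ 2 / 2 := by
  apply le_of_forall_pos_le_add
  intro ε hε
  set r := ‖u - zp‖ ^ 2 with hr
  have hr0 : 0 ≤ r := sq_nonneg _
  set t : ℝ := min 1 (2 * ε / (r + 1)) with ht
  have ht0 : 0 < t := lt_min one_pos (by positivity)
  have ht1 : t ≤ 1 := min_le_left _ _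
  have htr : t * r / 2 ≤ ε := by
    have h1 : t ≤ 2 * ε / (r + 1) := min_le_right _ _
    have h2 : t * r ≤ (2 * ε / (r + 1)) * r := by
      apply mul_le_mul_of_nonneg_right h1 hr0
    have h3 : (2 * ε / (r + 1)) * r ≤ 2 * ε := by
      rw [div_mul_eq_mul_div, div_le_iff₀ (by positivity)]
      nlinarith
    linarith
  have hw : (1 - t) • zp + t • u ∈ X := hX hzp hu (by linarith) ht0.le (by ring)
  have H := hmin _ hw
  have hinner : ⟪v, (1 - t) • zp + t • u⟫ = (1 - t) * ⟪v, zp⟫ + t * ⟪v, u⟫ := by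
    rw [inner_add_right, real_inner_smul_right, real_inner_smul_right]
  have hpsi : ψ ((1 - t) • zp + t • u) ≤ (1 - t) * ψ zp + t * ψ u := by
    have := hψ.2 (Set.mem_univ zp) (Set.mem_univ u) (by linarith : (0:ℝ) ≤ 1 - t) ht0.le
      (by ring)
    simpa [smul_eq_mul] using this
  have hnorm : ‖(1 - t) • zp + t • u - zk‖ ^ 2 =
      (1 - t) * ‖zp - zk‖ ^ 2 + t * ‖u - zk‖ ^ 2 - t * (1 - t) * r := by
    have hwid : (1 - t) • zp + t • u - zk = (1 - t) • (zp - zk) + t • (u - zk) := by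
      module
    rw [hwid, comb_norm_sq]
    rw [show zp - zk - (u - zk) = zp - u by abel, norm_sub_rev zp u, ← hr]
  rw [hinner, hnorm] at H
  have hγψ : γ * ψ ((1 - t) • zp + t • u) ≤ γ * ((1 - t) * ψ zp + t * ψ u) :=
    mul_le_mul_of_nonneg_left hpsi hγ
  have key : t * (γ * (⟪v, zp⟫ + ψ zp) + ‖zp - zk‖ ^ 2 / 2 + (1 - t) * r / 2) ≤
      t * (γ * (⟪v, u⟫ + ψ u) + ‖u - zk‖ ^ 2 / 2) := by nlinarith [H, hγψ]
  have key2 := (mul_le_mul_iff_right₀ ht0).mp key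
  linarith

set_option maxHeartbeats 2000000

variable {F : Type*} [NormedAddCommGroup F] [InnerProductSpace ℝ F]

lemma asg_per_step {ψ g : F → ℝ} {g' : F → F}
    (hψ : ConvexOn ℝ Set.univ ψ)
    {L b gam GD : ℝ} (hb1 : 1 ≤ b) (hgam : 0 < gam) (hrel : gam * L = b / 2)
    {xk zk zkp xkp yk u d : F}
    (hdes : g xkp ≤ g yk + ⟪g' yk, xkp - yk⟫ + L * ‖xkp - yk‖ ^ 2)
    (hgi1 : g yk + ⟪g' yk, xk - yk⟫ ≤ g xk)
    (hgi2 : g yk + ⟪g' yk, u - yk⟫ ≤ g u)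
    (hps : gam * (⟪g' yk + d, zkp⟫ + ψ zkp) + ‖zkp - zk‖ ^ 2 / 2 + ‖u - zkp‖ ^ 2 / 2 ≤
      gam * (⟪g' yk + d, u⟫ + ψ u) + ‖u - zk‖ ^ 2 / 2)
    (hnoise : ⟪d, u⟫ - ⟪d, zkp⟫ ≤ GD)
    (hyk : yk = (1 - b⁻¹) • xk + b⁻¹ • zk)
    (hxkp : xkp = (1 - b⁻¹) • xk + b⁻¹ • zkp) :
    b * gam * ((g xkp + ψ xkp) - (g u + ψ u)) ≤
      gam * (b - 1) * ((g xk + ψ xk) - (g u + ψ u)) +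
      (‖u - zk‖ ^ 2 / 2 - ‖u - zkp‖ ^ 2 / 2) + gam * GD := by
  have hbpos : (0:ℝ) < b := by linarith
  set θ : ℝ := b⁻¹ with hθdef
  have hθpos : 0 < θ := by positivity
  have hθ1 : θ ≤ 1 := inv_le_one_of_one_le₀ hb1
  have hbθ : b * θ = 1 := mul_inv_cancel₀ hbpos.ne'
  have hid1 : xkp - yk = θ • (zkp - zk) := by rw [hxkp, hyk]; module
  have hid3 : θ • (zkp - zk) = θ • (zkp - u) + θ • (u - yk) + (1-θ) • (xk - yk) := by
    rw [hyk]; module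
  rw [hid1] at hdes
  have hn1 : ‖θ • (zkp - zk)‖ ^ 2 = θ ^ 2 * ‖zkp - zk‖ ^ 2 := by
    rw [norm_smul, Real.norm_eq_abs, abs_of_pos hθpos, mul_pow]
  rw [hn1] at hdes
  have hinner3 : ⟪g' yk, θ • (zkp - zk)⟫ =
      θ * ⟪g' yk, zkp - u⟫ + θ * ⟪g' yk, u - yk⟫ + (1-θ) * ⟪g' yk, xk - yk⟫ := by
    rw [hid3, inner_add_right, inner_add_right, real_inner_smul_right,
      real_inner_smul_right, real_inner_smul_right]
  rw [hinner3] at hdes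
  have e1 := mul_le_mul_of_nonneg_left hgi1 (by linarith : (0:ℝ) ≤ 1 - θ)
  have e2 := mul_le_mul_of_nonneg_left hgi2 hθpos.le
  have key1 : g xkp ≤ (1-θ) * g xk + θ * g u + θ * ⟪g' yk, zkp - u⟫ +
      L * (θ ^ 2 * ‖zkp - zk‖ ^ 2) := by linarith only [hdes, e1, e2]
  have hv1 : ⟪g' yk + d, zkp⟫ = ⟪g' yk, zkp⟫ + ⟪d, zkp⟫ := inner_add_left _ _ _
  have hv2 : ⟪g' yk + d, u⟫ = ⟪g' yk, u⟫ + ⟪d, u⟫ := inner_add_left _ _ _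
  rw [hv1, hv2] at hps
  have hIsub : ⟪g' yk, zkp - u⟫ = ⟪g' yk, zkp⟫ - ⟪g' yk, u⟫ := inner_sub_right _ _ _
  have hγnoise := mul_le_mul_of_nonneg_left hnoise hgam.le
  have key2 : gam * ⟪g' yk, zkp - u⟫ + ‖zkp - zk‖ ^ 2 / 2 + ‖u - zkp‖ ^ 2 / 2 ≤
      gam * (ψ u - ψ zkp) + ‖u - zk‖ ^ 2 / 2 + gam * GD := by
    rw [hIsub]; linarith only [hps, hγnoise]
  have hψc : ψ xkp ≤ (1-θ) * ψ xk + θ * ψ zkp := by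
    rw [hxkp]
    have := hψ.2 (Set.mem_univ xk) (Set.mem_univ zkp)
      (by linarith : (0:ℝ) ≤ 1 - θ) hθpos.le (by ring)
    simpa [smul_eq_mul] using this
  have m1 := mul_le_mul_of_nonneg_left key1 hgam.le
  have m2 := mul_le_mul_of_nonneg_left hψc hgam.le
  have m3 := mul_le_mul_of_nonneg_left key2 hθpos.le
  have hNeq : gam * (L * (θ ^ 2 * ‖zkp - zk‖ ^ 2)) = θ * (‖zkp - zk‖ ^ 2 / 2) := by
    rw [show gam * (L * (θ ^ 2 * ‖zkp - zk‖ ^ 2)) = (gam * L) * θ ^ 2 * ‖zkp - zk‖ ^ 2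
      by ring, hrel, hθdef]
    field_simp
  have main_theta : gam * (g xkp + ψ xkp) ≤
      gam * (1-θ) * (g xk + ψ xk) + gam * θ * (g u + ψ u) +
      θ * (‖u - zk‖ ^ 2 / 2 - ‖u - zkp‖ ^ 2 / 2) + θ * (gam * GD) := by
    linarith only [m1, m2, m3, hNeq]
  have m4 := mul_le_mul_of_nonneg_left main_theta hbpos.le
  have q1 : b * (gam * (1-θ) * (g xk + ψ xk)) = gam * (b - 1) * (g xk + ψ xk) := by
    linear_combination (-(gam * (g xk + ψ xk))) * hbθ
  have q2 : b * (gam * θ * (g u + ψ u)) = gam * (g u + ψ u) := by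
    linear_combination (gam * (g u + ψ u)) * hbθ
  have q3 : b * (θ * (‖u - zk‖ ^ 2 / 2 - ‖u - zkp‖ ^ 2 / 2)) =
      ‖u - zk‖ ^ 2 / 2 - ‖u - zkp‖ ^ 2 / 2 := by
    linear_combination (‖u - zk‖ ^ 2 / 2 - ‖u - zkp‖ ^ 2 / 2) * hbθ
  have q4 : b * (θ * (gam * GD)) = gam * GD := by
    linear_combination (gam * GD) * hbθ
  linarith only [m4, q1, q2, q3, q4]

lemma asg_telescope (L GD : ℝ) (hL : 0 < L) (K : ℕ)
    (Δ A : ℕ → ℝ) (hΔ : ∀ k, 1 ≤ k → k ≤ K → 0 ≤ Δ k)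
    (hstep : ∀ k, 1 ≤ k → k < K →
      ((k:ℝ)+1)^2 * Δ (k+1) ≤ ((k:ℝ)^2 - 1) * Δ k + 8*L*(A k - A (k+1)) +
        4*((k:ℝ)+1)*GD) :
    ∀ k, 2 ≤ k → k ≤ K →
      (k:ℝ)^2 * Δ k + 8*L*(A k) ≤ 8*L*(A 1) + ((k:ℝ)*((k:ℝ)+1) - 2)*(2*GD) := by
  intro k hk2
  induction k, hk2 using Nat.le_induction with
  | base =>
    intro h2K
    have h1 := hstep 1 le_rfl (by omega)
    push_cast at h1 ⊢
    nlinarith [h1]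
  | succ k hk ih =>
    intro hk1K
    have hkK : k < K := hk1K
    have ihh := ih hkK.le
    have h1 := hstep k (by omega) hkK
    have hΔk := hΔ k (by omega) hkK.le
    push_cast
    push_cast at ihh h1
    nlinarith [h1, ihh, hΔk]


/-- Theorem 2.1 (constant penalty parameters), feasibility bound: running the single-loop
penalty ASG scheme with `ρ = K^{3/2}`, `β_k = (k+1)/2`, `γ_k = (k+1)/(4(L_f + ρL_c))`
for `1 ≤ k < K` and bounded noise `‖δ_k‖ ≤ 2G` yields
`‖[c(x_K)]₊‖ ≤ √(6GD)·K^{−3/4} + √(12L_c)·D·K^{−1} + 2Λ·K^{−3/2} + √(12L_f)·D·K^{−7/4}`. -/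
theorem penalty_asg_constant_feasibility {n m : ℕ}
    (X : Set (EuclideanSpace ℝ (Fin n))) (hXne : X.Nonempty)
    (hXcompact : IsCompact X) (hXconv : Convex ℝ X)
    (D : ℝ) (hD : 0 < D) (hdiam : ∀ x ∈ X, ∀ y ∈ X, ‖x - y‖ ≤ D)
    (ψ f : EuclideanSpace ℝ (Fin n) → ℝ)
    (hψ : ConvexOn ℝ Set.univ ψ) (hf : ConvexOn ℝ Set.univ f)
    (f' : EuclideanSpace ℝ (Fin n) → EuclideanSpace ℝ (Fin n))
    (hfgrad : ∀ x, HasGradientAt f (f' x) x)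
    (Lf : ℝ) (hLf : 0 < Lf)
    (hfLip : ∀ x ∈ X, ∀ y ∈ X, ‖f' x - f' y‖ ≤ Lf * ‖x - y‖)
    (c : Fin m → EuclideanSpace ℝ (Fin n) → ℝ)
    (hcconv : ∀ i, ConvexOn ℝ Set.univ (c i))
    (c' : Fin m → EuclideanSpace ℝ (Fin n) → EuclideanSpace ℝ (Fin n))
    (hcgrad : ∀ i x, HasGradientAt (c i) (c' i x) x)
    (P' : EuclideanSpace ℝ (Fin n) → EuclideanSpace ℝ (Fin n))
    (hPgrad : ∀ x, HasGradientAt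
      (fun u => (1 : ℝ) / 2 * ∑ i, max (c i u) 0 ^ 2) (P' x) x)
    (Lc : ℝ) (hLc : 0 < Lc)
    (hPLip : ∀ x ∈ X, ∀ y ∈ X, ‖P' x - P' y‖ ≤ Lc * ‖x - y‖)
    (G : ℝ) (hG : 0 < G)
    (K : ℕ) (hK : 2 ≤ K)
    (ρ : ℝ) (hρ : ρ = (K : ℝ) ^ ((3 : ℝ) / 2))
    (β γ : ℕ → ℝ)
    (hβ : ∀ k, 1 ≤ k → k < K → β k = ((k : ℝ) + 1) / 2)
    (hγ : ∀ k, 1 ≤ k → k < K → γ k = ((k : ℝ) + 1) / (4 * (Lf + ρ * Lc)))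
    (xbar : EuclideanSpace ℝ (Fin n)) (hxbarX : xbar ∈ X)
    (hxbarfeas : ∀ i, c i xbar ≤ 0)
    (hxbaropt : ∀ u ∈ X, (∀ i, c i u ≤ 0) → f xbar + ψ xbar ≤ f u + ψ u)
    (lam : Fin m → ℝ) (hlam : ∀ i, 0 ≤ lam i)
    (hlag : ∀ u ∈ X, f xbar + ψ xbar ≤ f u + ψ u + ∑ i, lam i * c i u)
    (xρ : EuclideanSpace ℝ (Fin n)) (hxρX : xρ ∈ X)
    (hxρopt : ∀ u ∈ X,
      f xρ + ψ xρ + ρ * ((1 : ℝ) / 2 * ∑ i, max (c i xρ) 0 ^ 2) ≤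
        f u + ψ u + ρ * ((1 : ℝ) / 2 * ∑ i, max (c i u) 0 ^ 2))
    (x z y δ : ℕ → EuclideanSpace ℝ (Fin n))
    (hx1 : x 1 ∈ X) (hz1 : z 1 = x 1)
    (hδ : ∀ k, 1 ≤ k → k < K → ‖δ k‖ ≤ 2 * G)
    (hy : ∀ k, 1 ≤ k → k < K → y k = (1 - (β k)⁻¹) • x k + (β k)⁻¹ • z k)
    (hzX : ∀ k, 1 ≤ k → k < K → z (k + 1) ∈ X)
    (hprox : ∀ k, 1 ≤ k → k < K → ∀ u ∈ X,
      γ k * (⟪f' (y k) + ρ • P' (y k) + δ k, z (k + 1)⟫ + ψ (z (k + 1))) +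
          ‖z (k + 1) - z k‖ ^ 2 / 2 ≤
        γ k * (⟪f' (y k) + ρ • P' (y k) + δ k, u⟫ + ψ u) + ‖u - z k‖ ^ 2 / 2)
    (hxrec : ∀ k, 1 ≤ k → k < K →
      x (k + 1) = (1 - (β k)⁻¹) • x k + (β k)⁻¹ • z (k + 1)) :
    Real.sqrt (∑ i, max (c i (x K)) 0 ^ 2) ≤
      Real.sqrt (6 * G * D) * (K : ℝ) ^ (-(3 : ℝ) / 4) +
      Real.sqrt (12 * Lc) * D * (K : ℝ) ^ (-(1 : ℝ)) +
      2 * Real.sqrt (∑ i, lam i ^ 2) * (K : ℝ) ^ (-(3 : ℝ) / 2) +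
      Real.sqrt (12 * Lf) * D * (K : ℝ) ^ (-(7 : ℝ) / 4) := by
  have hK2 : (2 : ℝ) ≤ (K : ℝ) := by exact_mod_cast hK
  have hKpos : (0 : ℝ) < (K : ℝ) := by linarith
  have hρpos : 0 < ρ := hρ ▸ Real.rpow_pos_of_pos hKpos _
  set L : ℝ := Lf + ρ * Lc with hLdef
  have hLpos : 0 < L := by positivity
  set P : EuclideanSpace ℝ (Fin n) → ℝ :=
    fun u => (1 : ℝ) / 2 * ∑ i, max (c i u) 0 ^ 2 with hPdef
  have hPconv : ConvexOn ℝ Set.univ P := convexOn_penalty c hcconv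
  -- optimality of xρ for F := f + ψ + ρ P
  have hFopt : ∀ w ∈ X, f xρ + ψ xρ + ρ * P xρ ≤ f w + ψ w + ρ * P w := by
    intro w hw; exact hxρopt w hw
  -- Lipschitz bound for combined gradient
  have hgLip : ∀ w ∈ X, ∀ v ∈ X,
      ‖(f' w + ρ • P' w) - (f' v + ρ • P' v)‖ ≤ L * ‖w - v‖ := by
    intro w hw v hv
    have h1 : (f' w + ρ • P' w) - (f' v + ρ • P' v)
        = (f' w - f' v) + ρ • (P' w - P' v) := by module
    rw [h1]
    calc ‖(f' w - f' v) + ρ • (P' w - P' v)‖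
        ≤ ‖f' w - f' v‖ + ‖ρ • (P' w - P' v)‖ := norm_add_le _ _
      _ = ‖f' w - f' v‖ + ρ * ‖P' w - P' v‖ := by
          rw [norm_smul, Real.norm_eq_abs, abs_of_pos hρpos]
      _ ≤ Lf * ‖w - v‖ + ρ * (Lc * ‖w - v‖) := by
          have := hPLip w hw v hv
          have := hfLip w hw v hv
          have hwv : 0 ≤ ‖w - v‖ := norm_nonneg _
          nlinarith [hPLip w hw v hv, hfLip w hw v hv]
      _ = L * ‖w - v‖ := by rw [hLdef]; ring
  -- combined gradient
  have hggrad : ∀ w, HasGradientAt (fun u => f u + ρ * P u) (f' w + ρ • P' w) w := by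
    intro w
    rw [hasGradientAt_iff_hasFDerivAt]
    have h1 := (hfgrad w).hasFDerivAt
    have h2 := ((hPgrad w).hasFDerivAt).const_smul ρ
    have h3 := h1.add h2
    have heq : (InnerProductSpace.toDual ℝ (EuclideanSpace ℝ (Fin n))) (f' w + ρ • P' w) =
        (InnerProductSpace.toDual ℝ (EuclideanSpace ℝ (Fin n))) (f' w) +
          ρ • (InnerProductSpace.toDual ℝ (EuclideanSpace ℝ (Fin n))) (P' w) := by
      rw [map_add, map_smul]
    rw [heq]
    exact h3.congr_fderiv rfl
  -- gradient inequality for combined function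
  have hgi : ∀ w u', (f w + ρ * P w) + ⟪f' w + ρ • P' w, u' - w⟫ ≤ f u' + ρ * P u' := by
    intro w u'
    have h1 := grad_ineq hf hfgrad w u'
    have h2 := grad_ineq hPconv hPgrad w u'
    have h2' := mul_le_mul_of_nonneg_left h2 hρpos.le
    have hsplit : ⟪f' w + ρ • P' w, u' - w⟫ = ⟪f' w, u' - w⟫ + ρ * ⟪P' w, u' - w⟫ := by
      rw [inner_add_left, real_inner_smul_left]
    rw [hsplit]
    have hP2 : P = fun u => (1 : ℝ) / 2 * ∑ i, max (c i u) 0 ^ 2 := rfl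
    nlinarith [h1, h2']
  -- memberships
  have hmem : ∀ k, 1 ≤ k → k ≤ K → x k ∈ X ∧ z k ∈ X := by
    intro k hk1
    induction k, hk1 using Nat.le_induction with
    | base => intro _; exact ⟨hx1, hz1 ▸ hx1⟩
    | succ k hk ih =>
      intro hk1K
      have hkK : k < K := hk1K
      obtain ⟨hxk, hzk⟩ := ih (le_of_lt hkK)
      have hz2 := hzX k hk hkK
      have hβk := hβ k hk hkK
      have hkR : (1 : ℝ) ≤ (k : ℝ) := by exact_mod_cast hk
      have hb1 : (1 : ℝ) ≤ β k := by rw [hβk]; linarith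
      have hbpos : (0 : ℝ) < β k := by linarith
      have hinv1 : (β k)⁻¹ ≤ 1 := inv_le_one_of_one_le₀ hb1
      have hinv0 : (0 : ℝ) ≤ (β k)⁻¹ := by positivity
      refine ⟨?_, hz2⟩
      rw [hxrec k hk hkK]
      exact hXconv hxk hz2 (by linarith) hinv0 (by ring)
  have hymem : ∀ k, 1 ≤ k → k < K → y k ∈ X := by
    intro k hk1 hkK
    obtain ⟨hxk, hzk⟩ := hmem k hk1 hkK.le
    have hβk := hβ k hk1 hkK
    have hkR : (1 : ℝ) ≤ (k : ℝ) := by exact_mod_cast hk1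
    have hb1 : (1 : ℝ) ≤ β k := by rw [hβk]; linarith
    have hbpos : (0 : ℝ) < β k := by linarith
    have hinv1 : (β k)⁻¹ ≤ 1 := inv_le_one_of_one_le₀ hb1
    have hinv0 : (0 : ℝ) ≤ (β k)⁻¹ := by positivity
    rw [hy k hk1 hkK]
    exact hXconv hxk hzk (by linarith) hinv0 (by ring)
  -- per-step inequality (clean multiplied form)
  have hLne : L ≠ 0 := ne_of_gt hLpos
  have hstep : ∀ k : ℕ, 1 ≤ k → k < K →
      ((k:ℝ)+1)^2 * ((f (x (k+1)) + ρ * P (x (k+1)) + ψ (x (k+1))) - (f xρ + ρ * P xρ + ψ xρ)) ≤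
      ((k:ℝ)^2 - 1) * ((f (x k) + ρ * P (x k) + ψ (x k)) - (f xρ + ρ * P xρ + ψ xρ)) +
      8*L*(‖xρ - z k‖ ^ 2 / 2 - ‖xρ - z (k+1)‖ ^ 2 / 2) + 4*((k:ℝ)+1)*(G*D) := by
    intro k hk1 hkK
    obtain ⟨hxk, hzk⟩ := hmem k hk1 hkK.le
    obtain ⟨hxk1, hzk1⟩ := hmem (k+1) (by omega) hkK
    have hyk := hymem k hk1 hkK
    have hβk := hβ k hk1 hkK
    have hγk := hγ k hk1 hkK
    have hkR : (1 : ℝ) ≤ (k : ℝ) := by exact_mod_cast hk1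
    have hb1 : (1 : ℝ) ≤ ((k:ℝ)+1)/2 := by linarith
    have hγpos' : (0 : ℝ) < ((k:ℝ)+1)/(4*L) := by positivity
    have hrel : (((k:ℝ)+1)/(4*L)) * L = (((k:ℝ)+1)/2) / 2 := by
      field_simp; ring
    have hyk_eq := hy k hk1 hkK
    have hxk1_eq := hxrec k hk1 hkK
    rw [hβk] at hyk_eq hxk1_eq
    have hdes := descent_lemma hggrad hXconv hLpos.le hgLip hyk hxk1
    have hgi1 := hgi (y k) (x k)
    have hgi2 := hgi (y k) xρ
    have hproxk := hprox k hk1 hkK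
    rw [hγk] at hproxk
    have hps := prox_strong hXconv hψ hγpos'.le (f' (y k) + ρ • P' (y k) + δ k)
      (z k) (z (k+1)) xρ hzk1 hxρX hproxk
    have hnoise : ⟪δ k, xρ⟫ - ⟪δ k, z (k+1)⟫ ≤ 2*(G*D) := by
      have h1 : ⟪δ k, xρ⟫ - ⟪δ k, z (k+1)⟫ = ⟪δ k, xρ - z (k+1)⟫ :=
        (inner_sub_right _ _ _).symm
      rw [h1]
      calc ⟪δ k, xρ - z (k+1)⟫ ≤ ‖δ k‖ * ‖xρ - z (k+1)‖ := real_inner_le_norm _ _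
        _ ≤ (2*G) * D := by
            have h2 := hδ k hk1 hkK
            have h3 := hdiam xρ hxρX (z (k+1)) hzk1
            have h0 : (0:ℝ) ≤ ‖xρ - z (k+1)‖ := norm_nonneg _
            nlinarith
        _ = 2 * (G*D) := by ring
    have hc := asg_per_step (g := fun w => f w + ρ * P w) (g' := fun w => f' w + ρ • P' w)
      hψ hb1 hγpos' hrel hdes hgi1 hgi2 hps hnoise hyk_eq hxk1_eq
    have M := mul_le_mul_of_nonneg_left hc (by positivity : (0:ℝ) ≤ 8*L)
    have E1 : (8*L) * ((((k:ℝ)+1)/2) * (((k:ℝ)+1)/(4*L)) *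
        ((f (x (k+1)) + ρ * P (x (k+1)) + ψ (x (k+1))) - (f xρ + ρ * P xρ + ψ xρ))) =
        ((k:ℝ)+1)^2 * ((f (x (k+1)) + ρ * P (x (k+1)) + ψ (x (k+1))) - (f xρ + ρ * P xρ + ψ xρ)) := by
      field_simp
      ring
    have E2 : (8*L) * ((((k:ℝ)+1)/(4*L)) * ((((k:ℝ)+1)/2) - 1) *
        ((f (x k) + ρ * P (x k) + ψ (x k)) - (f xρ + ρ * P xρ + ψ xρ))) =
        ((k:ℝ)^2 - 1) * ((f (x k) + ρ * P (x k) + ψ (x k)) - (f xρ + ρ * P xρ + ψ xρ)) := by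
      field_simp
      ring
    have E3 : (8*L) * ((((k:ℝ)+1)/(4*L)) * (2*(G*D))) = 4*((k:ℝ)+1)*(G*D) := by
      field_simp
      ring
    linarith only [M, E1, E2, E3]
  -- nonnegativity of the gap
  have hgap : ∀ k, 1 ≤ k → k ≤ K →
      0 ≤ (f (x k) + ρ * P (x k) + ψ (x k)) - (f xρ + ρ * P xρ + ψ xρ) := by
    intro k hk1 hkK
    have := hFopt (x k) (hmem k hk1 hkK).1
    linarith
  -- telescoping
  have htel := asg_telescope L (G*D) hLpos K
    (fun k => (f (x k) + ρ * P (x k) + ψ (x k)) - (f xρ + ρ * P xρ + ψ xρ))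
    (fun k => ‖xρ - z k‖ ^ 2 / 2) hgap hstep K hK le_rfl
  clear_value L P
  -- bound the gap at K
  have hz1X : z 1 ∈ X := hz1 ▸ hx1
  have hA1 : ‖xρ - z 1‖ ^ 2 / 2 ≤ D ^ 2 / 2 := by
    have h := hdiam xρ hxρX (z 1) hz1X
    nlinarith [norm_nonneg (xρ - z 1)]
  have hAK : (0:ℝ) ≤ ‖xρ - z K‖ ^ 2 / 2 := by positivity
  have hGD : (0:ℝ) < G * D := mul_pos hG hD
  have hE : (K:ℝ)^2 * ((f (x K) + ρ * P (x K) + ψ (x K)) - (f xρ + ρ * P xρ + ψ xρ)) ≤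
      (K:ℝ)^2 * (4*L*D^2/(K:ℝ)^2 + 3*(G*D)) := by
    have e : (K:ℝ)^2 * (4*L*D^2/(K:ℝ)^2 + 3*(G*D)) = 4*L*D^2 + 3*(K:ℝ)^2*(G*D) := by
      field_simp
    rw [e]
    have p1 := mul_le_mul_of_nonneg_left hA1 (by positivity : (0:ℝ) ≤ 8*L)
    have p2 : (0:ℝ) ≤ 8*L*(‖xρ - z K‖ ^ 2 / 2) := by positivity
    have p3 := mul_nonneg (sq_nonneg ((K:ℝ)-1)) hGD.le
    linarith only [htel, p1, p2, p3, hGD.le]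
  have hΔKfin : (f (x K) + ρ * P (x K) + ψ (x K)) - (f xρ + ρ * P xρ + ψ xρ) ≤
      4*L*D^2/(K:ℝ)^2 + 3*(G*D) :=
    le_of_mul_le_mul_left hE (by positivity)
  -- penalty / Lagrangian argument
  have hsum0 : (0:ℝ) ≤ ∑ i, max (c i (x K)) 0 ^ 2 :=
    Finset.sum_nonneg fun i _ => sq_nonneg _
  have hv0 : (0:ℝ) ≤ Real.sqrt (∑ i, max (c i (x K)) 0 ^ 2) := Real.sqrt_nonneg _
  have hv2 : Real.sqrt (∑ i, max (c i (x K)) 0 ^ 2) ^ 2 = ∑ i, max (c i (x K)) 0 ^ 2 :=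
    Real.sq_sqrt hsum0
  have hPK : P (x K) = Real.sqrt (∑ i, max (c i (x K)) 0 ^ 2) ^ 2 / 2 := by
    rw [hv2]; simp only [hPdef]; ring
  have hPbar : P xbar = 0 := by
    simp only [hPdef]
    have hz : ∀ i : Fin m, max (c i xbar) 0 ^ 2 = 0 := fun i => by
      rw [max_eq_right (hxbarfeas i)]; ring
    rw [Finset.sum_congr rfl (fun i _ => hz i)]
    simp
  have hΛ0 : (0:ℝ) ≤ Real.sqrt (∑ i, lam i ^ 2) := Real.sqrt_nonneg _
  have hlam2 : (0:ℝ) ≤ ∑ i, lam i ^ 2 := Finset.sum_nonneg fun i _ => sq_nonneg _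
  have hCS : ∑ i, lam i * max (c i (x K)) 0 ≤
      Real.sqrt (∑ i, lam i ^ 2) * Real.sqrt (∑ i, max (c i (x K)) 0 ^ 2) := by
    have h1 := Finset.sum_mul_sq_le_sq_mul_sq Finset.univ lam (fun i => max (c i (x K)) 0)
    have h2 : (0:ℝ) ≤ ∑ i, lam i * max (c i (x K)) 0 :=
      Finset.sum_nonneg fun i _ => mul_nonneg (hlam i) (le_max_right _ _)
    have h4 : (0:ℝ) ≤ Real.sqrt (∑ i, lam i ^ 2) * Real.sqrt (∑ i, max (c i (x K)) 0 ^ 2) :=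
      mul_nonneg hΛ0 hv0
    calc ∑ i, lam i * max (c i (x K)) 0
        = Real.sqrt ((∑ i, lam i * max (c i (x K)) 0) ^ 2) := (Real.sqrt_sq h2).symm
      _ ≤ Real.sqrt ((Real.sqrt (∑ i, lam i ^ 2) * Real.sqrt (∑ i, max (c i (x K)) 0 ^ 2)) ^ 2) := by
          apply Real.sqrt_le_sqrt
          rw [mul_pow, Real.sq_sqrt hlam2, hv2]
          exact h1
      _ = Real.sqrt (∑ i, lam i ^ 2) * Real.sqrt (∑ i, max (c i (x K)) 0 ^ 2) :=
          Real.sqrt_sq h4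
  have hlagK := hlag (x K) (hmem K (by omega) le_rfl).1
  have hsumle : ∑ i, lam i * c i (x K) ≤ ∑ i, lam i * max (c i (x K)) 0 :=
    Finset.sum_le_sum fun i _ => mul_le_mul_of_nonneg_left (le_max_left _ _) (hlam i)
  have hchain : ρ * (Real.sqrt (∑ i, max (c i (x K)) 0 ^ 2) ^ 2 / 2) ≤
      Real.sqrt (∑ i, lam i ^ 2) * Real.sqrt (∑ i, max (c i (x K)) 0 ^ 2) +
        (4*L*D^2/(K:ℝ)^2 + 3*(G*D)) := by
    have h5 : f xρ + ψ xρ + ρ * P xρ ≤ f xbar + ψ xbar := by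
      have h5' := hFopt xbar hxbarX
      rw [hPbar] at h5'
      linarith
    have h6 : ρ * P (x K) = ρ * (Real.sqrt (∑ i, max (c i (x K)) 0 ^ 2) ^ 2 / 2) := by
      rw [hPK]
    linarith [hΔKfin, h5, hlagK, hsumle, hCS, hPbar, h6]
  have hquad : Real.sqrt (∑ i, max (c i (x K)) 0 ^ 2) ^ 2 ≤
      (2 * Real.sqrt (∑ i, lam i ^ 2) / ρ) * Real.sqrt (∑ i, max (c i (x K)) 0 ^ 2) +
        2 * (4*L*D^2/(K:ℝ)^2 + 3*(G*D)) / ρ := by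
    have h7 : ρ * (Real.sqrt (∑ i, max (c i (x K)) 0 ^ 2) ^ 2) ≤
        ρ * ((2 * Real.sqrt (∑ i, lam i ^ 2) / ρ) * Real.sqrt (∑ i, max (c i (x K)) 0 ^ 2) +
          2 * (4*L*D^2/(K:ℝ)^2 + 3*(G*D)) / ρ) := by
      have e : ρ * ((2 * Real.sqrt (∑ i, lam i ^ 2) / ρ) * Real.sqrt (∑ i, max (c i (x K)) 0 ^ 2) +
          2 * (4*L*D^2/(K:ℝ)^2 + 3*(G*D)) / ρ) =
          2 * Real.sqrt (∑ i, lam i ^ 2) * Real.sqrt (∑ i, max (c i (x K)) 0 ^ 2) +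
          2 * (4*L*D^2/(K:ℝ)^2 + 3*(G*D)) := by
        field_simp
      rw [e]
      linarith [hchain]
    exact le_of_mul_le_mul_left h7 hρpos
  have hEnn : (0:ℝ) ≤ 4*L*D^2/(K:ℝ)^2 + 3*(G*D) := by positivity
  have hvb := le_add_sqrt hv0 (by positivity) (by positivity) hquad
  -- split the sqrt of the error term
  have hsplitE : 2 * (4*L*D^2/(K:ℝ)^2 + 3*(G*D)) / ρ =
      8*Lf*D^2/((K:ℝ)^2*ρ) + 8*Lc*D^2/(K:ℝ)^2 + 6*(G*D)/ρ := by
    rw [hLdef]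
    field_simp
    ring
  have hs1 : Real.sqrt (2 * (4*L*D^2/(K:ℝ)^2 + 3*(G*D)) / ρ) ≤
      Real.sqrt (8*Lf*D^2/((K:ℝ)^2*ρ)) + Real.sqrt (8*Lc*D^2/(K:ℝ)^2) +
        Real.sqrt (6*(G*D)/ρ) := by
    rw [hsplitE]
    have a1 : (0:ℝ) ≤ 8*Lf*D^2/((K:ℝ)^2*ρ) := by positivity
    have a2 : (0:ℝ) ≤ 8*Lc*D^2/(K:ℝ)^2 := by positivity
    have a3 : (0:ℝ) ≤ 6*(G*D)/ρ := by positivity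
    have h1 := sqrt_add_le' (show (0:ℝ) ≤ 8*Lf*D^2/((K:ℝ)^2*ρ) + 8*Lc*D^2/(K:ℝ)^2 by positivity) a3
    have h2 := sqrt_add_le' a1 a2
    have h3 : Real.sqrt (8*Lf*D^2/((K:ℝ)^2*ρ) + 8*Lc*D^2/(K:ℝ)^2) + Real.sqrt (6*(G*D)/ρ) ≤
        Real.sqrt (8*Lf*D^2/((K:ℝ)^2*ρ)) + Real.sqrt (8*Lc*D^2/(K:ℝ)^2) + Real.sqrt (6*(G*D)/ρ) := by
      linarith
    exact h1.trans h3
  -- rpow computations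
  have hKrne : (0:ℝ) ≤ (K:ℝ) := hKpos.le
  have hρinv : ρ⁻¹ = (K:ℝ) ^ (-(3:ℝ)/2) := by
    rw [hρ, show (-(3:ℝ)/2) = -((3:ℝ)/2) by norm_num, Real.rpow_neg hKrne]
  have hsqrtρinv : Real.sqrt ρ⁻¹ = (K:ℝ) ^ (-(3:ℝ)/4) := by
    rw [hρinv, Real.sqrt_eq_rpow, ← Real.rpow_mul hKrne]
    norm_num
  have T1 : Real.sqrt (6*(G*D)/ρ) = Real.sqrt (6*G*D) * (K:ℝ) ^ (-(3:ℝ)/4) := by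
    rw [show 6*(G*D)/ρ = (6*G*D)*ρ⁻¹ by ring,
      Real.sqrt_mul (by positivity : (0:ℝ) ≤ 6*G*D), hsqrtρinv]
  have T2 : Real.sqrt (8*Lc*D^2/(K:ℝ)^2) ≤ Real.sqrt (12*Lc) * D * (K:ℝ) ^ (-(1:ℝ)) := by
    have e : 8*Lc*D^2/(K:ℝ)^2 = (8*Lc)*(D/(K:ℝ))^2 := by
      rw [div_pow]; ring
    rw [e, Real.sqrt_mul (by positivity : (0:ℝ) ≤ 8*Lc),
      Real.sqrt_sq (by positivity : (0:ℝ) ≤ D/(K:ℝ)), Real.rpow_neg_one]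
    have h8 : Real.sqrt (8*Lc) ≤ Real.sqrt (12*Lc) := Real.sqrt_le_sqrt (by linarith)
    have := mul_le_mul_of_nonneg_right h8 (by positivity : (0:ℝ) ≤ D/(K:ℝ))
    calc Real.sqrt (8*Lc) * (D/(K:ℝ)) ≤ Real.sqrt (12*Lc) * (D/(K:ℝ)) := this
      _ = Real.sqrt (12*Lc) * D * ((K:ℝ))⁻¹ := by rw [div_eq_mul_inv]; ring
  have T3 : Real.sqrt (8*Lf*D^2/((K:ℝ)^2*ρ)) ≤ Real.sqrt (12*Lf) * D * (K:ℝ) ^ (-(7:ℝ)/4) := by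
    have e : 8*Lf*D^2/((K:ℝ)^2*ρ) = ((8*Lf)*(D/(K:ℝ))^2)*ρ⁻¹ := by
      rw [div_pow]; field_simp
    rw [e, Real.sqrt_mul (by positivity : (0:ℝ) ≤ (8*Lf)*(D/(K:ℝ))^2),
      Real.sqrt_mul (by positivity : (0:ℝ) ≤ 8*Lf),
      Real.sqrt_sq (by positivity : (0:ℝ) ≤ D/(K:ℝ)), hsqrtρinv]
    have h8 : Real.sqrt (8*Lf) ≤ Real.sqrt (12*Lf) := Real.sqrt_le_sqrt (by linarith)
    have hmono : Real.sqrt (8*Lf) * (D/(K:ℝ)) * (K:ℝ) ^ (-(3:ℝ)/4) ≤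
        Real.sqrt (12*Lf) * (D/(K:ℝ)) * (K:ℝ) ^ (-(3:ℝ)/4) := by
      have hr : (0:ℝ) ≤ (D/(K:ℝ)) * (K:ℝ) ^ (-(3:ℝ)/4) := by positivity
      calc Real.sqrt (8*Lf) * (D/(K:ℝ)) * (K:ℝ) ^ (-(3:ℝ)/4)
          = Real.sqrt (8*Lf) * ((D/(K:ℝ)) * (K:ℝ) ^ (-(3:ℝ)/4)) := by ring
        _ ≤ Real.sqrt (12*Lf) * ((D/(K:ℝ)) * (K:ℝ) ^ (-(3:ℝ)/4)) :=
            mul_le_mul_of_nonneg_right h8 hr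
        _ = Real.sqrt (12*Lf) * (D/(K:ℝ)) * (K:ℝ) ^ (-(3:ℝ)/4) := by ring
    have heq : Real.sqrt (12*Lf) * (D/(K:ℝ)) * (K:ℝ) ^ (-(3:ℝ)/4) =
        Real.sqrt (12*Lf) * D * (K:ℝ) ^ (-(7:ℝ)/4) := by
      rw [div_eq_mul_inv, ← Real.rpow_neg_one (K:ℝ)]
      rw [show Real.sqrt (12*Lf) * (D * (K:ℝ) ^ (-1:ℝ)) * (K:ℝ) ^ (-(3:ℝ)/4) =
        Real.sqrt (12*Lf) * D * ((K:ℝ) ^ (-1:ℝ) * (K:ℝ) ^ (-(3:ℝ)/4)) by ring,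
        ← Real.rpow_add hKpos]
      norm_num
    linarith [hmono, heq.symm.le, heq.le]
  have T4 : 2 * Real.sqrt (∑ i, lam i ^ 2) / ρ =
      2 * Real.sqrt (∑ i, lam i ^ 2) * (K:ℝ) ^ (-(3:ℝ)/2) := by
    rw [div_eq_mul_inv, hρinv]
  linarith [hvb, hs1, T1.le, T1.ge, T2, T3, T4.le, T4.ge]
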